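/- arXiv:2403.17305 — 5 statements merged into one kernel-verified Lean document; each statement's English description precedes it below -/
import Mathlib

section
/- Let T > 0 be real and ρ ∈ ℝ. Then the identity sinh(T−t)²/sinh(T)² + 2ρ·sinh(T−t)·sinh(t)/sinh(T)² + sinh(t)²/sinh(T)² + 2·sinh(T−t)·sinh(t)/sinh(T) = 1 holds for every t with 0 < t < T if and only if ρ = exp(−T). (Constancy of the variance of the Ornstein–Uhlenbeck bridge mixture.) -/
/-!
Multiplying by `sinh T ^ 2` and writing `T = (T - t) + t`, the identity
`sinh (a + b) ^ 2 = sinh a ^ 2 + sinh b ^ 2 + 2 cosh (a + b) sinh a sinh b` turns the equation into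
`2 sinh (T - t) sinh t (ρ - (cosh T - sinh T)) = 0`, and `cosh T - sinh T = exp (-T)`.
-/

open Real

lemma Real.sinh_add_sq (a b : ℝ) :
    sinh (a + b) ^ 2 = sinh a ^ 2 + sinh b ^ 2 + 2 * cosh (a + b) * sinh a * sinh b := by
  rw [sinh_add, cosh_add]
  nlinarith [cosh_sq a, cosh_sq b]

lemma Real.sinh_sub_sq_div_add_sinh_mul_sinh_div_eq_one_iff {T t : ℝ} (hT : T ≠ 0) (ht : t ≠ 0)
    (htT : t ≠ T) (ρ : ℝ) :
    sinh (T - t) ^ 2 / sinh T ^ 2 + 2 * ρ * sinh (T - t) * sinh t / sinh T ^ 2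
        + sinh t ^ 2 / sinh T ^ 2 + 2 * sinh (T - t) * sinh t / sinh T = 1
      ↔ ρ = exp (-T) := by
  have hsT : sinh T ≠ 0 := sinh_ne_zero.2 hT
  have hsplit := sinh_add_sq (T - t) t
  rw [sub_add_cancel] at hsplit
  have key : sinh (T - t) ^ 2 / sinh T ^ 2 + 2 * ρ * sinh (T - t) * sinh t / sinh T ^ 2
        + sinh t ^ 2 / sinh T ^ 2 + 2 * sinh (T - t) * sinh t / sinh T - 1
      = 2 * sinh (T - t) * sinh t * (ρ - exp (-T)) / sinh T ^ 2 := by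
    rw [← cosh_sub_sinh]
    field_simp
    linear_combination -hsplit
  rw [← sub_eq_zero, key, ← sub_eq_zero (a := ρ)]
  simp [hT, ht, sub_eq_zero, htT.symm]

/-- Constancy of the variance of the Ornstein--Uhlenbeck bridge mixture. -/
theorem ou_bridge_mixture_variance_constant (T : ℝ) (hT : 0 < T) (ρ : ℝ) :
    (∀ t : ℝ, 0 < t → t < T →
        Real.sinh (T - t) ^ 2 / Real.sinh T ^ 2
          + 2 * ρ * Real.sinh (T - t) * Real.sinh t / Real.sinh T ^ 2
          + Real.sinh t ^ 2 / Real.sinh T ^ 2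
          + 2 * Real.sinh (T - t) * Real.sinh t / Real.sinh T = 1)
      ↔ ρ = Real.exp (-T) := by
  constructor
  · intro h
    have hmid : 0 < T / 2 ∧ T / 2 < T := ⟨half_pos hT, half_lt_self hT⟩
    exact (sinh_sub_sq_div_add_sinh_mul_sinh_div_eq_one_iff hT.ne' hmid.1.ne' hmid.2.ne ρ).1
      (h _ hmid.1 hmid.2)
  · intro hρ t ht htT
    exact (sinh_sub_sq_div_add_sinh_mul_sinh_div_eq_one_iff hT.ne' ht.ne' htT.ne ρ).2 hρ
end

section
/- For all real numbers r, s, c, the spectrum of the matrix C(r,s,c) is exactly the set {½(c+r+2+√(c²−2cr+5r²+8rs+4s²)), ½(c+r+2−√(c²−2cr+5r²+8rs+4s²)), ½(−c−r+2+√(c²−2cr+5r²−8rs+4s²)), ½(−c−r+2−√(c²−2cr+5r²−8rs+4s²))}. -/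
/-- The symmetric 4×4 Toeplitz matrix appearing in the construction of the
candidate measure for the Ornstein--Uhlenbeck Brenier--Schrödinger problem. -/
def matC (r s c : ℝ) : Matrix (Fin 4) (Fin 4) ℝ :=
  !![1, r, s, c;
     r, 1, r, s;
     s, r, 1, r;
     c, s, r, 1]

/-!
`C(r,s,c)` commutes with the reversal of coordinates, so it preserves the symmetric vectors
`(a,b,b,a)` and the antisymmetric vectors `(a,b,-b,-a)`, where it acts by
`[[1+c, r+s], [r+s, 1+r]]` and `[[1-c, r-s], [r-s, 1-r]]`. Its characteristic polynomial is therefore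
the product of two quadratics, and the quadratic formula gives the four eigenvalues; the
discriminants `(c-r)² + 4(s±r)²` are nonnegative, so all roots are real.
-/

lemma two_mul_sub_sq_eq_iff {b D : ℝ} (hD : 0 ≤ D) (x : ℝ) :
    (2 * x - b) ^ 2 = D ↔ x = (b + √D) / 2 ∨ x = (b - √D) / 2 := by
  rw [← Real.sq_sqrt hD, sq_eq_sq_iff_eq_or_eq_neg, Real.sqrt_sq (Real.sqrt_nonneg D)]
  apply or_congr <;> constructor <;> intro h <;> linarith

lemma eval_charpoly_matC (r s c x : ℝ) :
    (matC r s c).charpoly.eval x =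
      ((2 * x - (c + r + 2)) ^ 2 - (c ^ 2 - 2 * c * r + 5 * r ^ 2 + 8 * r * s + 4 * s ^ 2)) *
        ((2 * x - (-c - r + 2)) ^ 2 - (c ^ 2 - 2 * c * r + 5 * r ^ 2 - 8 * r * s + 4 * s ^ 2))
        / 16 := by
  rw [Matrix.eval_charpoly]
  simp [matC, Matrix.det_succ_row_zero, Fin.sum_univ_succ, Fin.succAbove]
  ring

/-- The spectrum of `C(r,s,c)`. -/
theorem spectrum_matC (r s c : ℝ) :
    spectrum ℝ (matC r s c) =
      { (c + r + 2 + Real.sqrt (c ^ 2 - 2 * c * r + 5 * r ^ 2 + 8 * r * s + 4 * s ^ 2)) / 2,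
        (c + r + 2 - Real.sqrt (c ^ 2 - 2 * c * r + 5 * r ^ 2 + 8 * r * s + 4 * s ^ 2)) / 2,
        (-c - r + 2 + Real.sqrt (c ^ 2 - 2 * c * r + 5 * r ^ 2 - 8 * r * s + 4 * s ^ 2)) / 2,
        (-c - r + 2 - Real.sqrt (c ^ 2 - 2 * c * r + 5 * r ^ 2 - 8 * r * s + 4 * s ^ 2)) / 2 } := by
  have hD₁ : 0 ≤ c ^ 2 - 2 * c * r + 5 * r ^ 2 + 8 * r * s + 4 * s ^ 2 := by
    nlinarith [sq_nonneg (c - r), sq_nonneg (s + r)]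
  have hD₂ : 0 ≤ c ^ 2 - 2 * c * r + 5 * r ^ 2 - 8 * r * s + 4 * s ^ 2 := by
    nlinarith [sq_nonneg (c - r), sq_nonneg (s - r)]
  ext x
  rw [Matrix.mem_spectrum_iff_isRoot_charpoly, Polynomial.IsRoot.def, eval_charpoly_matC,
    div_eq_zero_iff, or_iff_left (by norm_num), mul_eq_zero, sub_eq_zero, sub_eq_zero,
    two_mul_sub_sq_eq_iff hD₁, two_mul_sub_sq_eq_iff hD₂]
  simp only [Set.mem_insert_iff, Set.mem_singleton_iff, or_assoc]
end

section
/- Let r ∈ (−1,1) and s, c ∈ ℝ. The matrix C(r,s,c) is positive definite if and only if (s²+2rs+r²−r−1)/(r+1) < c < (s²−2rs+r²+r−1)/(r−1). -/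
open Matrix

lemma dotProduct_mulVec_fin_two (a b d : ℝ) (x : Fin 2 → ℝ) :
    x ⬝ᵥ !![a, b; b, d] *ᵥ x = a * x 0 ^ 2 + 2 * b * x 0 * x 1 + d * x 1 ^ 2 := by
  simp [dotProduct, mulVec, Fin.sum_univ_two]
  ring

lemma isHermitian_fin_two (a b d : ℝ) : (!![a, b; b, d]).IsHermitian := by
  ext i j; fin_cases i <;> fin_cases j <;> rfl

theorem posDef_fin_two_iff {a b d : ℝ} :
    (!![a, b; b, d]).PosDef ↔ 0 < d ∧ 0 < a * d - b ^ 2 := by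
  simp only [posDef_iff_dotProduct_mulVec, star_trivial, dotProduct_mulVec_fin_two,
    isHermitian_fin_two, true_and]
  constructor
  · intro h
    have hd : 0 < d := by simpa using h (x := ![0, 1]) (by simp)
    have hdet := h (x := ![d, -b]) (by simp [hd.ne'])
    simp only [cons_val_zero, cons_val_one, cons_val_fin_one] at hdet
    refine ⟨hd, pos_of_mul_pos_right ?_ hd.le⟩
    convert hdet using 1
    ring
  · rintro ⟨hd, hdet⟩ x hx
    have key : d * (a * x 0 ^ 2 + 2 * b * x 0 * x 1 + d * x 1 ^ 2) =
        (b * x 0 + d * x 1) ^ 2 + (a * d - b ^ 2) * x 0 ^ 2 := by ring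
    refine pos_of_mul_pos_right ?_ hd.le
    rw [key]
    rcases eq_or_ne (x 0) 0 with h0 | h0
    · have h1 : x 1 ≠ 0 := fun h1 => hx (by ext i; fin_cases i <;> simp [h0, h1])
      rw [h0, mul_zero, zero_add]
      positivity
    · positivity

def symmAddAntisymm (y z : Fin 2 → ℝ) : Fin 4 → ℝ := ![y 0 + z 0, y 1 + z 1, y 1 - z 1, y 0 - z 0]

lemma exists_symmAddAntisymm_eq (x : Fin 4 → ℝ) : ∃ y z, symmAddAntisymm y z = x := by
  refine ⟨![(x 0 + x 3) / 2, (x 1 + x 2) / 2], ![(x 0 - x 3) / 2, (x 1 - x 2) / 2], ?_⟩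
  ext i; fin_cases i <;> simp [symmAddAntisymm] <;> ring

lemma symmAddAntisymm_eq_zero_iff {y z : Fin 2 → ℝ} :
    symmAddAntisymm y z = 0 ↔ y = 0 ∧ z = 0 := by
  constructor
  · intro h
    have h0 := congrFun h 0
    have h1 := congrFun h 1
    have h2 := congrFun h 2
    have h3 := congrFun h 3
    simp only [symmAddAntisymm, Fin.isValue, cons_val, Pi.zero_apply] at h0 h1 h2 h3
    constructor <;> ext i <;> fin_cases i <;> simp <;> linarith
  · rintro ⟨rfl, rfl⟩; ext i; fin_cases i <;> simp [symmAddAntisymm]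

lemma dotProduct_matC_mulVec_symmAddAntisymm (r s c : ℝ) (y z : Fin 2 → ℝ) :
    symmAddAntisymm y z ⬝ᵥ matC r s c *ᵥ symmAddAntisymm y z =
      2 * (y ⬝ᵥ !![1 + c, r + s; r + s, 1 + r] *ᵥ y +
        z ⬝ᵥ !![1 - c, r - s; r - s, 1 - r] *ᵥ z) := by
  simp [symmAddAntisymm, matC, dotProduct, mulVec, Fin.sum_univ_four]
  ring

lemma isHermitian_matC (r s c : ℝ) : (matC r s c).IsHermitian := by
  ext i j; fin_cases i <;> fin_cases j <;> rfl

theorem posDef_matC_iff_posDef_blocks (r s c : ℝ) :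
    (matC r s c).PosDef ↔
      (!![1 + c, r + s; r + s, 1 + r]).PosDef ∧ (!![1 - c, r - s; r - s, 1 - r]).PosDef := by
  have hC := dotProduct_matC_mulVec_symmAddAntisymm r s c
  constructor
  · intro h
    refine ⟨.of_dotProduct_mulVec_pos (isHermitian_fin_two _ _ _) fun y hy => ?_,
      .of_dotProduct_mulVec_pos (isHermitian_fin_two _ _ _) fun z hz => ?_⟩
    · simpa [hC] using h.dotProduct_mulVec_pos (x := symmAddAntisymm y 0)
        (by simpa [symmAddAntisymm_eq_zero_iff])
    · simpa [hC] using h.dotProduct_mulVec_pos (x := symmAddAntisymm 0 z)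
        (by simpa [symmAddAntisymm_eq_zero_iff])
  · rintro ⟨hP, hN⟩
    refine .of_dotProduct_mulVec_pos (isHermitian_matC r s c) fun x hx => ?_
    obtain ⟨y, z, rfl⟩ := exists_symmAddAntisymm_eq x
    have hPy := hP.posSemidef.dotProduct_mulVec_nonneg y
    have hNz := hN.posSemidef.dotProduct_mulVec_nonneg z
    simp only [star_trivial, hC] at *
    rcases not_and_or.mp (symmAddAntisymm_eq_zero_iff.not.mp hx) with hy | hz
    · have := hP.dotProduct_mulVec_pos hy
      simp only [star_trivial] at this
      linarith
    · have := hN.dotProduct_mulVec_pos hz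
      simp only [star_trivial] at this
      linarith

/-- Positive-definiteness criterion for `C(r,s,c)`. -/
theorem posDef_matC_iff (r s c : ℝ) (hr : r ∈ Set.Ioo (-1 : ℝ) 1) :
    (matC r s c).PosDef ↔
      ((s ^ 2 + 2 * r * s + r ^ 2 - r - 1) / (r + 1) < c
        ∧ c < (s ^ 2 - 2 * r * s + r ^ 2 + r - 1) / (r - 1)) := by
  obtain ⟨hr₁, hr₂⟩ := hr
  have hlower : (s ^ 2 + 2 * r * s + r ^ 2 - r - 1) / (r + 1) < c ↔
      0 < (1 + c) * (1 + r) - (r + s) ^ 2 := by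
    rw [div_lt_iff₀ (by linarith)]; constructor <;> intro h <;> linarith
  have hupper : c < (s ^ 2 - 2 * r * s + r ^ 2 + r - 1) / (r - 1) ↔
      0 < (1 - c) * (1 - r) - (r - s) ^ 2 := by
    rw [lt_div_iff_of_neg (by linarith)]; constructor <;> intro h <;> linarith
  rw [posDef_matC_iff_posDef_blocks, posDef_fin_two_iff, posDef_fin_two_iff, hlower, hupper,
    and_iff_right (show (0 : ℝ) < 1 + r by linarith),
    and_iff_right (show (0 : ℝ) < 1 - r by linarith)]
end

section
/- Let r ∈ (−1,1) and s ∈ ℝ. There exists c ∈ ℝ with (s²+2rs+r²−r−1)/(r+1) < c < (s²−2rs+r²+r−1)/(r−1) if and only if 2r² − 1 < s < 1. -/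
/-!
Both bounds have denominators of fixed sign, so an admissible `c` exists exactly when the lower
bound is below the upper one. Clearing denominators, the gap between them is
`2 (1 - s) (s - (2r² - 1)) / (1 - r²)`, which is positive iff `s` lies strictly between
`2r² - 1` and `1`.
-/

lemma exists_between_iff_lt {α : Type*} [LinearOrder α] [DenselyOrdered α] {a b : α} :
    (∃ c, a < c ∧ c < b) ↔ a < b :=
  ⟨fun ⟨_, hac, hcb⟩ => hac.trans hcb, exists_between⟩

lemma toeplitz_upper_sub_lower {K : Type*} [Field K] {r s : K} (hr₁ : r + 1 ≠ 0)
    (hr₂ : r - 1 ≠ 0) :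
    (s ^ 2 - 2 * r * s + r ^ 2 + r - 1) / (r - 1) - (s ^ 2 + 2 * r * s + r ^ 2 - r - 1) / (r + 1)
      = 2 * ((1 - s) * (s - (2 * r ^ 2 - 1))) / (1 - r ^ 2) := by
  have hr : 1 - r ^ 2 ≠ 0 := by
    rw [show 1 - r ^ 2 = -((r + 1) * (r - 1)) by ring]
    exact neg_ne_zero.mpr (mul_ne_zero hr₁ hr₂)
  field_simp
  ring

lemma mul_pos_iff_between {R : Type*} [Ring R] [LinearOrder R] [IsStrictOrderedRing R] {a s : R}
    (ha : a < 1) : 0 < (1 - s) * (s - a) ↔ a < s ∧ s < 1 := by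
  rw [mul_pos_iff, sub_pos, sub_pos, sub_neg, sub_neg]
  constructor
  · rintro (⟨hs1, has⟩ | ⟨h1s, hsa⟩)
    · exact ⟨has, hs1⟩
    · exact absurd (h1s.trans hsa) ha.not_gt
  · rintro ⟨has, hs1⟩
    exact Or.inl ⟨hs1, has⟩

/-- Solvability of the two inequalities appearing in the positive-definiteness
criterion for the Toeplitz matrix `C(r,s,c)`. -/
theorem exists_c_between_iff (r s : ℝ) (hr : r ∈ Set.Ioo (-1 : ℝ) 1) :
    (∃ c : ℝ, (s ^ 2 + 2 * r * s + r ^ 2 - r - 1) / (r + 1) < c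
        ∧ c < (s ^ 2 - 2 * r * s + r ^ 2 + r - 1) / (r - 1))
      ↔ (2 * r ^ 2 - 1 < s ∧ s < 1) := by
  obtain ⟨hr₁, hr₂⟩ := hr
  have hr_sq : r ^ 2 < 1 := by nlinarith
  rw [exists_between_iff_lt, ← sub_pos,
    toeplitz_upper_sub_lower (by linarith) (by linarith),
    div_pos_iff_of_pos_right (by linarith), mul_pos_iff_of_pos_left two_pos,
    mul_pos_iff_between (by linarith)]
end

section
/- For all real s, t ≥ 0 and every x ∈ ℝ, the probability measure obtained by first sampling y from N(exp(−t)·x, 1 − exp(−2t)) and then sampling from N(exp(−s)·y, 1 − exp(−2s)) equals N(exp(−(s+t))·x, 1 − exp(−2(s+t))). (Chapman–Kolmogorov / semigroup property of the Ornstein–Uhlenbeck transition kernels.) -/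
/-!
Mixing a kernel of translates `y ↦ ν.map (y + ·)` against `μ` is the convolution `μ ∗ ν`, so
`N(m, v).bind (z ↦ N(z, w)) = N(m, v) ∗ N(0, w) = N(m, v + w)`. Pushing the first Gaussian
forward by `y ↦ c y` first handles the kernel `y ↦ N(c y, w)`, and with `c = e^{-s}` the
variances combine as `e^{-2s} (1 - e^{-2t}) + (1 - e^{-2s}) = 1 - e^{-2(s+t)}`.
-/

open MeasureTheory ProbabilityTheory Real
open scoped NNReal

namespace MeasureTheory.Measure

variable {α β γ : Type*} [MeasurableSpace α] [MeasurableSpace β] [MeasurableSpace γ]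

theorem bind_map {f : α → β} {g : β → Measure γ} (hf : Measurable f) (hg : Measurable g)
    (μ : Measure α) : (μ.map f).bind g = μ.bind (g ∘ f) := by
  rw [bind, bind, map_map hg hf]

theorem bind_map_const_add_eq_conv {G : Type*} [AddMonoid G] [MeasurableSpace G]
    [MeasurableAdd₂ G] (μ ν : Measure G) [SFinite ν] :
    μ.bind (fun x => ν.map (x + ·)) = μ ∗ ν := by
  have hmeas : Measurable fun x => ν.map (x + ·) := by
    refine measurable_of_measurable_coe _ fun s hs => ?_
    simp_rw [map_apply (measurable_const_add _) hs]
    exact measurable_measure_prodMk_left (measurable_add hs)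
  ext s hs
  rw [bind_apply hs hmeas.aemeasurable, conv, map_apply measurable_add hs,
    prod_apply (measurable_add hs)]
  simp_rw [map_apply (measurable_const_add _) hs]
  rfl

end MeasureTheory.Measure

namespace ProbabilityTheory

theorem gaussianReal_bind_gaussianReal (m : ℝ) (v w : ℝ≥0) :
    (gaussianReal m v).bind (gaussianReal · w) = gaussianReal m (v + w) := by
  have htranslate : (gaussianReal · w) = fun z => (gaussianReal 0 w).map (z + ·) := by
    simp_rw [gaussianReal_map_const_add, zero_add]
  rw [htranslate, Measure.bind_map_const_add_eq_conv, gaussianReal_conv_gaussianReal, add_zero]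

theorem gaussianReal_bind_gaussianReal_const_mul (m c : ℝ) (v w : ℝ≥0) :
    (gaussianReal m v).bind (fun y => gaussianReal (c * y) w)
      = gaussianReal (c * m) (.mk (c ^ 2) (sq_nonneg c) * v + w) := by
  rw [← gaussianReal_bind_gaussianReal, ← gaussianReal_map_const_mul,
    Measure.bind_map (measurable_const_mul c) (by fun_prop)]
  rfl

end ProbabilityTheory

lemma one_sub_exp_neg_two_mul_nonneg {t : ℝ} (ht : 0 ≤ t) : 0 ≤ 1 - exp (-2 * t) :=
  sub_nonneg.2 (exp_le_one_iff.2 (by linarith))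

lemma ou_variance_add {s t : ℝ} (hs : 0 ≤ s) (ht : 0 ≤ t) :
    .mk (exp (-s) ^ 2) (sq_nonneg _) * (1 - exp (-2 * t)).toNNReal
        + (1 - exp (-2 * s)).toNNReal = (1 - exp (-2 * (s + t))).toNNReal := by
  ext
  push_cast
  rw [coe_toNNReal _ (one_sub_exp_neg_two_mul_nonneg ht),
    coe_toNNReal _ (one_sub_exp_neg_two_mul_nonneg hs),
    coe_toNNReal _ (one_sub_exp_neg_two_mul_nonneg (add_nonneg hs ht)),
    ← exp_nat_mul, mul_sub, ← exp_add]
  ring_nf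

/-- Chapman--Kolmogorov / semigroup property of the Ornstein--Uhlenbeck transition
kernels `x ↦ N(exp(-t)·x, 1 - exp(-2t))`. -/
theorem ou_chapman_kolmogorov (s t : ℝ) (hs : 0 ≤ s) (ht : 0 ≤ t) (x : ℝ) :
    (gaussianReal (Real.exp (-t) * x) (1 - Real.exp (-2 * t)).toNNReal).bind
        (fun y => gaussianReal (Real.exp (-s) * y) (1 - Real.exp (-2 * s)).toNNReal)
      = gaussianReal (Real.exp (-(s + t)) * x) (1 - Real.exp (-2 * (s + t))).toNNReal := by
  rw [gaussianReal_bind_gaussianReal_const_mul, ou_variance_add hs ht, ← mul_assoc, ← exp_add,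
    neg_add]
end
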